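/- (Bound on path gradient) Suppose μ is a critical point of the weighted Huber loss at parameter λ > 0, with at least one index in A = {i : |xᵢ − μ| < λ} and at least one index in B = {i : |xᵢ − μ| ≥ λ}, and wᵢ > 0 for all i. Then |Σ_{i∈B} wᵢ·sign(xᵢ − μ)| < Σ_{i∈A} wᵢ; that is, the path-gradient η = −(Σ_{i∈B} wᵢ·sign(xᵢ−μ))/(Σ_{i∈A} wᵢ) satisfies |η| < 1. -/
import Mathlib


open scoped Classical BigOperators

theorem stmt_14 (n : ℕ) (x w : Fin n → ℝ) (hw : ∀ i, 0 < w i) (l : ℝ) (hl : 0 < l) (μ : ℝ)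
    (hA : (Finset.univ.filter (fun i => |x i - μ| < l)).Nonempty)
    (hB : (Finset.univ.filter (fun i => l ≤ |x i - μ|)).Nonempty)
    (hcrit : (∑ i ∈ Finset.univ.filter (fun i => |x i - μ| < l), w i * (x i - μ))
      + l * ∑ i ∈ Finset.univ.filter (fun i => l ≤ |x i - μ|), w i * Real.sign (x i - μ) = 0) :
    |∑ i ∈ Finset.univ.filter (fun i => l ≤ |x i - μ|), w i * Real.sign (x i - μ)|
      < ∑ i ∈ Finset.univ.filter (fun i => |x i - μ| < l), w i := by
  set A := Finset.univ.filter (fun i => |x i - μ| < l) with hAdef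
  set B := Finset.univ.filter (fun i => l ≤ |x i - μ|) with hBdef
  set SB := ∑ i ∈ B, w i * Real.sign (x i - μ) with hSB
  have hkey : l * SB = -(∑ i ∈ A, w i * (x i - μ)) := by linarith
  have h1 : |∑ i ∈ A, w i * (x i - μ)| ≤ ∑ i ∈ A, |w i * (x i - μ)| :=
    Finset.abs_sum_le_sum_abs _ _
  have h2 : ∑ i ∈ A, |w i * (x i - μ)| < ∑ i ∈ A, w i * l := by
    apply Finset.sum_lt_sum_of_nonempty hA
    intro i hi
    have hx : |x i - μ| < l := (Finset.mem_filter.mp hi).2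
    rw [abs_mul, abs_of_pos (hw i)]
    exact (mul_lt_mul_iff_right₀ (hw i)).mpr hx
  have h3 : l * |SB| < l * ∑ i ∈ A, w i := by
    have : |l * SB| = |∑ i ∈ A, w i * (x i - μ)| := by rw [hkey, abs_neg]
    rw [abs_mul, abs_of_pos hl] at this
    calc l * |SB| = |∑ i ∈ A, w i * (x i - μ)| := this
      _ ≤ ∑ i ∈ A, |w i * (x i - μ)| := h1
      _ < ∑ i ∈ A, w i * l := h2
      _ = l * ∑ i ∈ A, w i := by rw [Finset.mul_sum]; exact Finset.sum_congr rfl fun i _ => mul_comm _ _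
  exact lt_of_mul_lt_mul_left h3 hl.le
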